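/- Let E be a real inner product space and φ: E → ℝ a differentiable strictly convex function with Bregman divergence d_φ. Fix β < 1 and let f be the log-sum-exp generator f(z) = (exp((β − 1)z) − 1)/(β − 1), so f'(z) = exp((β − 1)z). Let x_1, …, x_n ∈ E, θ ∈ E, w_i = exp((β − 1) d_φ(x_i, θ)), and θ̃ = (Σ_i w_i x_i)/(Σ_j w_j). Then Σ_{i=1}^n f(d_φ(x_i, θ̃)) ≤ Σ_{i=1}^n f(d_φ(x_i, θ)). -/

import Mathlib

/-!
The objective is a sum of a concave function `f` of the divergences, and the weights
`wᵢ = f'(d_φ(xᵢ, θ))` are its slopes at the current point, so by the tangent-line inequality it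
suffices that the update does not increase the linearisation `∑ wᵢ d_φ(xᵢ, ·)`. For Bregman
divergences the weighted mean `μ` of the `xᵢ` satisfies the compensation identity
`∑ wᵢ d_φ(xᵢ, θ) = ∑ wᵢ d_φ(xᵢ, μ) + (∑ wᵢ) d_φ(μ, θ)`, and the last term is nonnegative.
-/

open scoped RealInnerProductSpace

/-- The Bregman divergence `d_φ(x, θ) = φ(x) − φ(θ) − ⟨x − θ, ∇φ(θ)⟩`. -/
noncomputable def bregman {E : Type*} [NormedAddCommGroup E] [InnerProductSpace ℝ E]
    [CompleteSpace E] (φ : E → ℝ) (x θ : E) : ℝ :=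
  φ x - φ θ - ⟪x - θ, gradient φ θ⟫

theorem ConvexOn.add_fderiv_sub_le {E : Type*} [NormedAddCommGroup E] [NormedSpace ℝ E]
    {s : Set E} {φ : E → ℝ} {φ' : E →L[ℝ] ℝ} {x θ : E} (hφ : ConvexOn ℝ s φ)
    (hx : x ∈ s) (hθ : θ ∈ s) (hφ' : HasFDerivAt φ φ' θ) :
    φ θ + φ' (x - θ) ≤ φ x := by
  set ℓ := AffineMap.lineMap (k := ℝ) θ x
  have hℓ : Set.Icc (0 : ℝ) 1 ⊆ ℓ ⁻¹' s := fun t ht =>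
    hφ.1.segment_subset hθ hx (segment_eq_image_lineMap ℝ θ x ▸ ⟨t, ht, rfl⟩)
  have hconv : ConvexOn ℝ (Set.Icc 0 1) (φ ∘ ℓ) :=
    (hφ.comp_affineMap ℓ).subset hℓ (convex_Icc 0 1)
  have hderiv : HasDerivAt (φ ∘ ℓ) (φ' (x - θ)) 0 :=
    HasFDerivAt.comp_hasDerivAt (0 : ℝ) (by simpa [ℓ] using hφ') AffineMap.hasDerivAt_lineMap
  have hslope := hconv.le_slope_of_hasDerivAt (by simp) (by simp) one_pos hderiv
  simp only [slope_def_field, Function.comp_apply, ℓ, AffineMap.lineMap_apply_zero,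
    AffineMap.lineMap_apply_one, sub_zero, div_one] at hslope
  linarith

theorem Finset.sum_smul_centerMass_of_nonneg {ι E : Type*} [AddCommGroup E] [Module ℝ E]
    (s : Finset ι) {w : ι → ℝ} (hw : ∀ i ∈ s, 0 ≤ w i) (x : ι → E) :
    (∑ i ∈ s, w i) • s.centerMass w x = ∑ i ∈ s, w i • x i := by
  by_cases hsum : ∑ i ∈ s, w i = 0
  · have hzero := (Finset.sum_eq_zero_iff_of_nonneg hw).mp hsum
    rw [hsum, zero_smul, eq_comm]
    exact Finset.sum_eq_zero fun i hi => by rw [hzero i hi, zero_smul]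
  · exact smul_inv_smul₀ hsum _

theorem Real.exp_mul_sub_one_div_le_of_neg {c : ℝ} (hc : c < 0) (a b : ℝ) :
    (Real.exp (c * a) - 1) / c ≤ (Real.exp (c * b) - 1) / c + Real.exp (c * b) * (a - b) := by
  have hexp : Real.exp (c * b) * (c * (a - b) + 1) ≤ Real.exp (c * a) := by
    calc Real.exp (c * b) * (c * (a - b) + 1)
        ≤ Real.exp (c * b) * Real.exp (c * (a - b)) :=
          mul_le_mul_of_nonneg_left (Real.add_one_le_exp _) (Real.exp_pos _).le
      _ = Real.exp (c * a) := by rw [← Real.exp_add]; ring_nf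
  rw [div_add' _ _ _ hc.ne, div_le_div_right_of_neg hc]
  nlinarith

section Bregman

variable {E : Type*} [NormedAddCommGroup E] [InnerProductSpace ℝ E] [CompleteSpace E]
  {φ : E → ℝ}

theorem bregman_nonneg (hφ : ConvexOn ℝ Set.univ φ) {θ : E} (hθ : DifferentiableAt ℝ φ θ)
    (x : E) : 0 ≤ bregman φ x θ := by
  have := hφ.add_fderiv_sub_le (Set.mem_univ x) (Set.mem_univ θ) hθ.hasGradientAt.hasFDerivAt
  rw [InnerProductSpace.toDual_apply_apply] at this
  rw [bregman, real_inner_comm]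
  linarith

theorem sum_mul_bregman_eq {ι : Type*} (s : Finset ι) (w : ι → ℝ) (x : ι → E) {μ : E}
    (hμ : (∑ i ∈ s, w i) • μ = ∑ i ∈ s, w i • x i) (φ : E → ℝ) (θ : E) :
    ∑ i ∈ s, w i * bregman φ (x i) θ =
      ∑ i ∈ s, w i * bregman φ (x i) μ + (∑ i ∈ s, w i) * bregman φ μ θ := by
  have hsub : ∀ y, ∑ i ∈ s, w i • (x i - y) = (∑ i ∈ s, w i) • (μ - y) := fun y => by
    simp only [smul_sub, Finset.sum_sub_distrib, ← Finset.sum_smul, hμ]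
  have hinner : ∀ y, ∑ i ∈ s, w i * ⟪x i - y, gradient φ y⟫ =
      (∑ i ∈ s, w i) * ⟪μ - y, gradient φ y⟫ := fun y => by
    simp only [← real_inner_smul_left, ← sum_inner, hsub]
  have hexpand : ∀ y, ∑ i ∈ s, w i * bregman φ (x i) y =
      ∑ i ∈ s, w i * φ (x i) - (∑ i ∈ s, w i) * (φ y + ⟪μ - y, gradient φ y⟫) := fun y => by
    simp only [bregman, mul_sub, Finset.sum_sub_distrib, ← Finset.sum_mul, hinner]
    ring
  rw [hexpand, hexpand, sub_self, inner_zero_left, bregman]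
  ring

theorem sum_mul_bregman_centerMass_le (hφ : ConvexOn ℝ Set.univ φ) {θ : E}
    (hθ : DifferentiableAt ℝ φ θ) {ι : Type*} (s : Finset ι) {w : ι → ℝ}
    (hw : ∀ i ∈ s, 0 ≤ w i) (x : ι → E) :
    ∑ i ∈ s, w i * bregman φ (x i) (s.centerMass w x) ≤ ∑ i ∈ s, w i * bregman φ (x i) θ := by
  rw [sum_mul_bregman_eq s w x (s.sum_smul_centerMass_of_nonneg hw x) φ θ]
  have := mul_nonneg (Finset.sum_nonneg hw) (bregman_nonneg hφ hθ (s.centerMass w x))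
  linarith

end Bregman

/-- For the log-sum-exp generator `f(z) = (exp((β−1)z) − 1)/(β−1)` with `β < 1`,
the weighted-mean update with weights `w_i = exp((β−1) d_φ(x_i, θ))` does not
increase the objective. -/
theorem log_sum_exp_update_decreases_objective
    {E : Type*} [NormedAddCommGroup E] [InnerProductSpace ℝ E] [CompleteSpace E]
    (φ : E → ℝ) (hφdiff : Differentiable ℝ φ)
    (hφconv : StrictConvexOn ℝ Set.univ φ)
    (β : ℝ) (hβ : β < 1)
    (f : ℝ → ℝ)
    (hf : ∀ z : ℝ, f z = (Real.exp ((β - 1) * z) - 1) / (β - 1))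
    (n : ℕ) (x : Fin n → E) (θ : E)
    (w : Fin n → ℝ)
    (hw : ∀ i, w i = Real.exp ((β - 1) * bregman φ (x i) θ))
    (θnew : E) (hθnew : θnew = (∑ i, w i)⁻¹ • ∑ i, w i • x i) :
    ∑ i, f (bregman φ (x i) θnew) ≤ ∑ i, f (bregman φ (x i) θ) := by
  have hw₀ : ∀ i ∈ Finset.univ, 0 ≤ w i := fun i _ => hw i ▸ (Real.exp_pos _).le
  have hlinear : ∑ i, w i * bregman φ (x i) θnew ≤ ∑ i, w i * bregman φ (x i) θ :=
    hθnew ▸ sum_mul_bregman_centerMass_le hφconv.convexOn (hφdiff θ) Finset.univ hw₀ x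
  have htangent : ∀ i, f (bregman φ (x i) θnew) ≤
      f (bregman φ (x i) θ) + w i * (bregman φ (x i) θnew - bregman φ (x i) θ) := fun i => by
    rw [hf, hf, hw]
    exact Real.exp_mul_sub_one_div_le_of_neg (by linarith) _ _
  calc ∑ i, f (bregman φ (x i) θnew)
      ≤ ∑ i, (f (bregman φ (x i) θ) + w i * (bregman φ (x i) θnew - bregman φ (x i) θ)) :=
        Finset.sum_le_sum fun i _ => htangent i
    _ = ∑ i, f (bregman φ (x i) θ) +
          (∑ i, w i * bregman φ (x i) θnew - ∑ i, w i * bregman φ (x i) θ) := by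
        simp only [Finset.sum_add_distrib, mul_sub, Finset.sum_sub_distrib]
    _ ≤ ∑ i, f (bregman φ (x i) θ) := by linarith
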